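/- arXiv:1908.10292 — 2 statements merged into one kernel-verified Lean document; each statement's English description precedes it below -/
import Mathlib

section
/- For every t ∈ [−1,1], the function U(t) := 3t(π − arccos t) + √(1 − t²) admits the convergent power-series representation U(t) = 1 + (3π/2) t + Σ_{i=0}^{∞} [ (4i+5)(1/2)_i / ( 2(2i+1)(i+1) i! ) ] t^{2i+2}, where (1/2)_i = (1/2)(3/2)⋯(1/2 + i − 1) is the Pochhammer symbol (with (1/2)_0 = 1). In particular, all coefficients of this power series are nonnegative. -/
/-!
Write `a n = (1/2)_n / n!` for the coefficients of `(1 - x)^(-1/2)`, so that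
`1 / √(1 - s²) = ∑ a n s^(2n)` for `|s| < 1`. The partial fraction decomposition
`(4i+5) / ((2i+1)(2i+2)) = 3/(2i+1) - 1/(2i+2)` splits the claimed series as `3t·S₁(t) - S₂(t)`,
where `S₁` and `S₂` are the termwise integrals of `∑ a n s^(2n)` and `∑ a n s^(2n+1)` from `0`
to `t`, namely `arcsin t` and `1 - √(1 - t²)`. This proves the identity on `(-1, 1)`. As the
coefficients are nonnegative and the partial sums stay below `3π/2` as `t → 1⁻`, the
coefficients are summable, so the series converges uniformly on `[-1, 1]` and the identity extends
to the endpoints by continuity.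
-/

open Real Set Filter Topology MeasureTheory Interval

noncomputable def invSqrtCoeff (n : ℕ) : ℝ := (ascPochhammer ℝ n).eval (1 / 2) / n.factorial

lemma invSqrtCoeff_nonneg (n : ℕ) : 0 ≤ invSqrtCoeff n := by
  have := ascPochhammer_pos n (1 / 2 : ℝ) (by norm_num)
  unfold invSqrtCoeff
  positivity

lemma ring_choose_eq_invSqrtCoeff (n : ℕ) :
    Ring.choose ((1 / 2 : ℝ) + n - 1) n = invSqrtCoeff n := by
  rw [Ring.choose_eq_smul, Polynomial.descPochhammer_smeval_eq_ascPochhammer,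
    Polynomial.ascPochhammer_smeval_cast, Polynomial.ascPochhammer_smeval_eq_eval, invSqrtCoeff,
    smul_eq_mul, div_eq_inv_mul]
  ring_nf

lemma hasSum_invSqrtCoeff_mul_pow {x : ℝ} (hx : |x| < 1) :
    HasSum (fun n => invSqrtCoeff n * x ^ n) (1 / √(1 - x)) := by
  have h := (one_div_one_sub_rpow_hasFPowerSeriesOnBall_zero (1 / 2)).hasSum
    (y := x) (by simpa [edist_dist, Real.dist_eq] using hx)
  simp only [FormalMultilinearSeries.ofScalars_apply_eq, ring_choose_eq_invSqrtCoeff, smul_eq_mul,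
    zero_add, ← Real.sqrt_eq_rpow] at h
  exact h

lemma hasSum_invSqrtCoeff_mul_pow_even {s : ℝ} (hs : |s| < 1) (k : ℕ) :
    HasSum (fun n => invSqrtCoeff n * s ^ (2 * n + k)) (s ^ k / √(1 - s ^ 2)) := by
  have hs2 : |s ^ 2| < 1 := by rw [abs_pow]; exact pow_lt_one₀ (abs_nonneg s) hs two_ne_zero
  have h := (hasSum_invSqrtCoeff_mul_pow hs2).mul_left (s ^ k)
  rw [mul_one_div] at h
  exact h.congr_fun fun n => by ring

lemma abs_le_of_mem_uIcc_zero {s t : ℝ} (hs : s ∈ [[0, t]]) : |s| ≤ |t| := by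
  simpa using abs_sub_left_of_mem_uIcc hs

lemma hasSum_invSqrtCoeff_integral {t : ℝ} (ht : |t| < 1) (k : ℕ) :
    HasSum (fun n => invSqrtCoeff n * (t ^ (2 * n + k + 1) / (2 * n + k + 1)))
      (∫ s in 0..t, s ^ k / √(1 - s ^ 2)) := by
  have ht2 : |t ^ 2| < 1 := by rw [abs_pow]; exact pow_lt_one₀ (abs_nonneg t) ht two_ne_zero
  have h := intervalIntegral.hasSum_integral_of_dominated_convergence
    (μ := volume) (F := fun n s => invSqrtCoeff n * s ^ (2 * n + k))
    (fun n _ => invSqrtCoeff n * (t ^ 2) ^ n)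
    (fun n => (by fun_prop : Continuous _).aestronglyMeasurable)
    (fun n => ae_of_all _ fun s hs => ?_)
    (ae_of_all _ fun _ _ => (hasSum_invSqrtCoeff_mul_pow ht2).summable)
    intervalIntegrable_const
    (ae_of_all _ fun s hs => hasSum_invSqrtCoeff_mul_pow_even
      ((abs_le_of_mem_uIcc_zero (uIoc_subset_uIcc hs)).trans_lt ht) k)
  · refine (h.congr_fun fun n => ?_)
    rw [intervalIntegral.integral_const_mul, integral_pow]
    push_cast
    ring
  · have hst := abs_le_of_mem_uIcc_zero (uIoc_subset_uIcc hs)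
    rw [norm_mul, norm_pow, Real.norm_eq_abs, abs_of_nonneg (invSqrtCoeff_nonneg n), pow_add,
      ← sq_abs t, ← pow_mul]
    refine mul_le_mul_of_nonneg_left ?_ (invSqrtCoeff_nonneg n)
    calc |s| ^ (2 * n) * |s| ^ k ≤ |t| ^ (2 * n) * 1 := by
          gcongr
          · exact pow_le_one₀ (abs_nonneg s) (hst.trans ht.le)
      _ = |t| ^ (2 * n) := mul_one _

lemma one_sub_sq_pos {s : ℝ} (hs : |s| < 1) : 0 < 1 - s ^ 2 := by
  rw [sub_pos, sq_lt_one_iff_abs_lt_one]; exact hs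

lemma intervalIntegrable_pow_div_sqrt_one_sub_sq {t : ℝ} (ht : |t| < 1) (k : ℕ) :
    IntervalIntegrable (fun s => s ^ k / √(1 - s ^ 2)) volume 0 t := by
  refine ContinuousOn.intervalIntegrable fun s hs => ContinuousAt.continuousWithinAt ?_
  have := one_sub_sq_pos ((abs_le_of_mem_uIcc_zero hs).trans_lt ht)
  fun_prop (disch := positivity)

lemma integral_one_div_sqrt_one_sub_sq {t : ℝ} (ht : |t| < 1) :
    ∫ s in 0..t, 1 / √(1 - s ^ 2) = arcsin t := by
  rw [intervalIntegral.integral_eq_sub_of_hasDerivAt (f := arcsin), arcsin_zero, sub_zero]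
  · intro s hs
    have hs1 := (abs_le_of_mem_uIcc_zero hs).trans_lt ht
    exact hasDerivAt_arcsin (by linarith [neg_abs_le s]) (by linarith [le_abs_self s])
  · simpa using intervalIntegrable_pow_div_sqrt_one_sub_sq ht 0

lemma integral_id_div_sqrt_one_sub_sq {t : ℝ} (ht : |t| < 1) :
    ∫ s in 0..t, s / √(1 - s ^ 2) = 1 - √(1 - t ^ 2) := by
  rw [intervalIntegral.integral_eq_sub_of_hasDerivAt (f := -fun s => √(1 - s ^ 2))]
  · simp only [Pi.neg_apply]
    rw [zero_pow two_ne_zero, sub_zero, sqrt_one]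
    ring
  · intro s hs
    have hs1 := one_sub_sq_pos ((abs_le_of_mem_uIcc_zero hs).trans_lt ht)
    refine (((hasDerivAt_pow 2 s).const_sub 1).sqrt hs1.ne').neg.congr_deriv ?_
    field_simp
    norm_num [mul_comm]
  · simpa using intervalIntegrable_pow_div_sqrt_one_sub_sq ht 1

lemma hasSum_arcsin {t : ℝ} (ht : |t| < 1) :
    HasSum (fun n => invSqrtCoeff n * (t ^ (2 * n + 1) / (2 * n + 1))) (arcsin t) := by
  have h := hasSum_invSqrtCoeff_integral ht 0
  simp only [pow_zero, add_zero, Nat.cast_zero] at h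
  rwa [integral_one_div_sqrt_one_sub_sq ht] at h

lemma hasSum_one_sub_sqrt_one_sub_sq {t : ℝ} (ht : |t| < 1) :
    HasSum (fun n => invSqrtCoeff n * (t ^ (2 * n + 2) / (2 * n + 2))) (1 - √(1 - t ^ 2)) := by
  have h := hasSum_invSqrtCoeff_integral ht 1
  simp only [pow_one, Nat.cast_one, add_assoc, one_add_one_eq_two] at h
  rwa [integral_id_div_sqrt_one_sub_sq ht] at h

lemma summable_of_sum_range_mul_pow_le {a : ℕ → ℝ} (ha : ∀ i, 0 ≤ a i) (e : ℕ → ℕ) {C : ℝ}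
    (h : ∀ t ∈ Ioo (0 : ℝ) 1, ∀ N, ∑ i ∈ Finset.range N, a i * t ^ e i ≤ C) : Summable a := by
  refine summable_of_sum_range_le (c := C) ha fun N => ?_
  have hcont : Continuous fun t : ℝ => ∑ i ∈ Finset.range N, a i * t ^ e i := by fun_prop
  have hlim : Tendsto (fun t : ℝ => ∑ i ∈ Finset.range N, a i * t ^ e i) (𝓝[<] 1)
      (𝓝 (∑ i ∈ Finset.range N, a i)) := by
    simpa using (hcont.tendsto 1).mono_left nhdsWithin_le_nhds
  exact le_of_tendsto hlim (eventually_of_mem (Ioo_mem_nhdsLT zero_lt_one) fun t ht => h t ht N)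

noncomputable def uCoeff (i : ℕ) : ℝ :=
  (4 * (i : ℝ) + 5) * (ascPochhammer ℝ i).eval (1 / 2 : ℝ) /
    (2 * (2 * (i : ℝ) + 1) * ((i : ℝ) + 1) * (Nat.factorial i))

lemma uCoeff_nonneg (i : ℕ) : 0 ≤ uCoeff i := by
  have := ascPochhammer_pos i (1 / 2 : ℝ) (by norm_num)
  unfold uCoeff
  positivity

lemma uCoeff_eq (i : ℕ) : uCoeff i = invSqrtCoeff i * (3 / (2 * i + 1) - 1 / (2 * i + 2)) := by
  unfold uCoeff invSqrtCoeff
  field_simp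
  ring

lemma hasSum_uCoeff_of_abs_lt {t : ℝ} (ht : |t| < 1) :
    HasSum (fun i => uCoeff i * t ^ (2 * i + 2)) (3 * t * arcsin t + √(1 - t ^ 2) - 1) := by
  have h := ((hasSum_arcsin ht).mul_left (3 * t)).sub (hasSum_one_sub_sqrt_one_sub_sq ht)
  rw [show 3 * t * arcsin t - (1 - √(1 - t ^ 2)) = 3 * t * arcsin t + √(1 - t ^ 2) - 1 by ring]
    at h
  refine h.congr_fun fun i => ?_
  rw [uCoeff_eq]
  ring

lemma summable_uCoeff : Summable uCoeff := by
  refine summable_of_sum_range_mul_pow_le uCoeff_nonneg (fun i => 2 * i + 2) (C := 3 * π / 2)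
    fun t ht N => ?_
  have ht1 : |t| < 1 := abs_lt.2 ⟨by linarith [ht.1], ht.2⟩
  refine (sum_le_hasSum _ (fun i _ => ?_) (hasSum_uCoeff_of_abs_lt ht1)).trans ?_
  · exact mul_nonneg (uCoeff_nonneg i) (pow_nonneg ht.1.le _)
  · have := mul_le_mul ht.2.le (arcsin_le_pi_div_two t) (arcsin_nonneg.2 ht.1.le) zero_le_one
    have := sqrt_le_one.mpr (show 1 - t ^ 2 ≤ 1 by nlinarith)
    nlinarith

lemma hasSum_uCoeff {t : ℝ} (ht : t ∈ Icc (-1 : ℝ) 1) :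
    HasSum (fun i => uCoeff i * t ^ (2 * i + 2)) (3 * t * arcsin t + √(1 - t ^ 2) - 1) := by
  have hbound : ∀ i, ∀ s ∈ Icc (-1 : ℝ) 1, ‖uCoeff i * s ^ (2 * i + 2)‖ ≤ uCoeff i := by
    intro i s hs
    rw [norm_mul, Real.norm_of_nonneg (uCoeff_nonneg i), norm_pow]
    exact mul_le_of_le_one_right (uCoeff_nonneg i)
      (pow_le_one₀ (norm_nonneg s) (abs_le.2 hs))
  have heq : EqOn (fun s => ∑' i, uCoeff i * s ^ (2 * i + 2))
      (fun s => 3 * s * arcsin s + √(1 - s ^ 2) - 1) (Icc (-1) 1) := by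
    refine EqOn.of_subset_closure (s := Ioo (-1) 1) (fun s hs => ?_)
      (continuousOn_tsum (fun i => by fun_prop) summable_uCoeff hbound) (by fun_prop)
      Ioo_subset_Icc_self (closure_Ioo (by norm_num)).ge
    exact (hasSum_uCoeff_of_abs_lt (abs_lt.2 hs)).tsum_eq
  have h := (summable_uCoeff.of_norm_bounded (hbound · t ht)).hasSum
  rwa [show ∑' i, uCoeff i * t ^ (2 * i + 2) = 3 * t * arcsin t + √(1 - t ^ 2) - 1
    from heq ht] at h

/-- For `t ∈ [−1,1]`, the function `U(t) = 3t(π − arccos t) + √(1 − t²)`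
has the convergent power-series representation
`U(t) = 1 + (3π/2)t + Σ_{i≥0} [(4i+5)(1/2)_i / (2(2i+1)(i+1) i!)] t^{2i+2}`,
and all the coefficients of this power series are nonnegative. -/
theorem statement_10 :
    let c : ℕ → ℝ := fun i =>
      (4 * (i : ℝ) + 5) * (ascPochhammer ℝ i).eval (1 / 2 : ℝ) /
        (2 * (2 * (i : ℝ) + 1) * ((i : ℝ) + 1) * (Nat.factorial i))
    (∀ t ∈ Set.Icc (-1 : ℝ) 1,
        HasSum (fun i : ℕ => c i * t ^ (2 * i + 2))
          ((3 * t * (Real.pi - Real.arccos t) + Real.sqrt (1 - t ^ 2)) -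
            (1 + 3 * Real.pi / 2 * t))) ∧
      ∀ i, 0 ≤ c i := by
  intro c
  refine ⟨fun t ht => ?_, uCoeff_nonneg⟩
  rw [arccos_eq_pi_div_two_sub_arcsin,
    show 3 * t * (π - (π / 2 - arcsin t)) + √(1 - t ^ 2) - (1 + 3 * π / 2 * t)
      = 3 * t * arcsin t + √(1 - t ^ 2) - 1 by ring]
  exact hasSum_uCoeff ht
end

section
/- Fix an integer ι ≥ 1. There exists a constant C depending only on ι and on the one-dimensional distribution P (through bounds on the triple products E_{z∼P}[q_a(z)q_b(z)q_c(z)] for indices a,b,c ≤ 2ι) such that for every dimension d and every family of real coefficients (γ_r) indexed by multi-indices r = (r_1,…,r_d) with |r| ≤ ι, the function f_γ(x) := Σ_{|r| ≤ ι} γ_r q_r(x) satisfies E_{X∼P^{⊗d}}[ f_γ(X)⁴ ] ≤ C ( E_{X∼P^{⊗d}}[ f_γ(X)² ] )² = C ( Σ_{|r| ≤ ι} γ_r² )². -/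
/-!
Bonami-type induction on the dimension, proving `‖f‖₄² ≤ L^m ‖f‖₂²` for every expansion `f` of
degree at most `m`. Splitting off the first coordinate, `f(x₀, y) = ∑ₖ q_k(x₀) g_k(y)`, where `g₀`
has degree `≤ m` and every `g_k` with `k ≥ 1` has degree `≤ m - 1`. Expanding `f⁴` and integrating
out `x₀` gives `∑ₜ E[q_{t₁}⋯q_{t₄}] E[g_{t₁}⋯g_{t₄}]` over index quadruples `t`. The zero quadruple
contributes `E g₀⁴`; quadruples with a single nonzero index vanish because `E q_k = 0`; every other
quadruple has two indices `≥ 1`, and Hölder bounds its term using the better bound on those `g_k`.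
With `L = (n+1)⁴ ∑ₜ |E[q_{t₁}⋯q_{t₄}]|` the estimate in dimension `d` thus gives it in `d + 1`.
The `L²` identity is the orthonormality of the product basis.
-/

open MeasureTheory

/-- The finite set of multi-indices `r : Fin d → ℕ` with `Σ_i r_i ≤ ι`, encoded with
coordinates in `Fin (ι+1)`. -/
abbrev MIdx (d ι : ℕ) := {r : Fin d → Fin (ι + 1) // ∑ i, (r i : ℕ) ≤ ι}

open Finset Polynomial

section Moments

variable {α : Type*} [MeasurableSpace α] {μ : Measure α}

theorem sq_integral_mul_le {f g : α → ℝ} (hf : Integrable (fun x => f x ^ 2) μ)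
    (hg : Integrable (fun x => g x ^ 2) μ) (hfg : Integrable (fun x => f x * g x) μ) :
    (∫ x, f x * g x ∂μ) ^ 2 ≤ (∫ x, f x ^ 2 ∂μ) * ∫ x, g x ^ 2 ∂μ := by
  have hquad : ∀ s : ℝ, 0 ≤ (∫ x, f x ^ 2 ∂μ) * (s * s) + (2 * ∫ x, f x * g x ∂μ) * s
      + ∫ x, g x ^ 2 ∂μ := by
    intro s
    have hexp : (fun x => (s * f x + g x) ^ 2)
        = fun x => (s * s) * f x ^ 2 + (2 * s) * (f x * g x) + g x ^ 2 := by
      funext x; ring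
    have h : 0 ≤ ∫ x, (s * f x + g x) ^ 2 ∂μ := integral_nonneg fun x => sq_nonneg _
    have hfg' : Integrable (fun x => s * s * f x ^ 2 + 2 * s * (f x * g x)) μ :=
      (hf.const_mul _).add (hfg.const_mul _)
    rw [hexp, integral_add hfg' hg,
      integral_add (hf.const_mul _) (hfg.const_mul _), integral_const_mul,
      integral_const_mul] at h
    linarith
  have hdiscr := discrim_le_zero hquad
  rw [discrim] at hdiscr
  linarith

theorem integral_sq_mul_le_sqrt_mul_sqrt {f g : α → ℝ} (hf : Integrable (fun x => f x ^ 4) μ)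
    (hg : Integrable (fun x => g x ^ 4) μ) (hfg : Integrable (fun x => f x ^ 2 * g x ^ 2) μ) :
    ∫ x, (f x * g x) ^ 2 ∂μ ≤ √(∫ x, f x ^ 4 ∂μ) * √(∫ x, g x ^ 4 ∂μ) := by
  have hpow : ∀ h : α → ℝ, (fun x => (h x ^ 2) ^ 2) = fun x => h x ^ 4 := fun h => by
    funext x; ring
  have hcs := sq_integral_mul_le (f := fun x => f x ^ 2) (g := fun x => g x ^ 2)
    (by rwa [hpow]) (by rwa [hpow]) hfg
  rw [hpow, hpow] at hcs
  simp_rw [mul_pow]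
  rw [← Real.sqrt_mul (integral_nonneg fun x => by positivity)]
  exact (le_abs_self _).trans (Real.abs_le_sqrt hcs)

theorem sq_integral_prod_four_le {κ : Type*} (g : κ → α → ℝ)
    (hg : ∀ t : Fin 4 → κ, Integrable (fun x => ∏ l, g (t l) x) μ) (t : Fin 4 → κ) :
    (∫ x, ∏ l, g (t l) x ∂μ) ^ 2 ≤ ∏ l, √(∫ x, g (t l) x ^ 4 ∂μ) := by
  have hint : ∀ (a b c e : κ) (F : α → ℝ), (∀ x, F x = g a x * g b x * (g c x * g e x)) →
      Integrable F μ := fun a b c e F hF => by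
    convert hg ![a, b, c, e] using 1
    funext x
    simp [Fin.prod_univ_four, hF, mul_assoc]
  have hpair : ∀ a b, ∫ x, (g a x * g b x) ^ 2 ∂μ
      ≤ √(∫ x, g a x ^ 4 ∂μ) * √(∫ x, g b x ^ 4 ∂μ) := fun a b =>
    integral_sq_mul_le_sqrt_mul_sqrt (hint a a a a _ fun x => by ring)
      (hint b b b b _ fun x => by ring) (hint a a b b _ fun x => by ring)
  simp only [Fin.prod_univ_four]
  calc (∫ x, g (t 0) x * g (t 1) x * g (t 2) x * g (t 3) x ∂μ) ^ 2
      = (∫ x, (g (t 0) x * g (t 1) x) * (g (t 2) x * g (t 3) x) ∂μ) ^ 2 := by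
        simp only [mul_assoc]
    _ ≤ (∫ x, (g (t 0) x * g (t 1) x) ^ 2 ∂μ) * ∫ x, (g (t 2) x * g (t 3) x) ^ 2 ∂μ :=
        sq_integral_mul_le (hint (t 0) (t 1) (t 0) (t 1) _ fun x => by ring)
          (hint (t 2) (t 3) (t 2) (t 3) _ fun x => by ring)
          (hint (t 0) (t 1) (t 2) (t 3) _ fun x => by ring)
    _ ≤ _ := mul_le_mul (hpair _ _) (hpair _ _) (integral_nonneg fun x => sq_nonneg _)
          (by positivity)
    _ = _ := by ring

theorem integral_sq_sum_of_orthonormal {κ : Type*} [Fintype κ] (φ : κ → α → ℝ)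
    (hint : ∀ a b, Integrable (fun x => φ a x * φ b x) μ)
    (hnorm : ∀ a, ∫ x, φ a x * φ a x ∂μ = 1)
    (horth : Pairwise fun a b => ∫ x, φ a x * φ b x ∂μ = 0) (c : κ → ℝ) :
    ∫ x, (∑ a, c a * φ a x) ^ 2 ∂μ = ∑ a, c a ^ 2 := by
  have hmul : ∀ a b, (fun x => c a * φ a x * (c b * φ b x))
      = fun x => c a * c b * (φ a x * φ b x) := fun a b => funext fun x => by ring
  have hint' : ∀ a b, Integrable (fun x => c a * φ a x * (c b * φ b x)) μ := fun a b => by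
    rw [hmul]; exact (hint a b).const_mul _
  simp_rw [sq, sum_mul_sum]
  rw [integral_finsetSum _ fun a _ => integrable_finsetSum _ fun b _ => hint' a b]
  refine sum_congr rfl fun a _ => ?_
  rw [integral_finsetSum _ fun b _ => hint' a b, sum_eq_single a
    (fun b _ hba => by rw [hmul, integral_const_mul, horth hba.symm, mul_zero]) (by simp),
    hmul, integral_const_mul, hnorm, mul_one]

end Moments

theorem Finset.prod_le_sq_mul_pow_card_sub_two {ι : Type*} [DecidableEq ι] {s : Finset ι}
    {f : ι → ℝ} {u v : ℝ} {i j : ι} (hi : i ∈ s) (hj : j ∈ s) (hij : i ≠ j)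
    (hf : ∀ l ∈ s, 0 ≤ f l) (hu : ∀ l ∈ s, f l ≤ u) (hfi : f i ≤ v) (hfj : f j ≤ v) :
    ∏ l ∈ s, f l ≤ v ^ 2 * u ^ (#s - 2) := by
  have hj' : j ∈ s.erase i := mem_erase.2 ⟨hij.symm, hj⟩
  have hcard : #((s.erase i).erase j) = #s - 2 := by
    rw [card_erase_of_mem hj', card_erase_of_mem hi]; omega
  have hrest : ∏ l ∈ (s.erase i).erase j, f l ≤ u ^ (#s - 2) := by
    rw [← hcard, ← prod_const]
    exact prod_le_prod (fun l hl => hf l (mem_of_mem_erase (mem_of_mem_erase hl)))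
      fun l hl => hu l (mem_of_mem_erase (mem_of_mem_erase hl))
  rw [← mul_prod_erase s f hi, ← mul_prod_erase _ f hj', ← mul_assoc, sq]
  exact mul_le_mul (mul_le_mul hfi hfj (hf j hj) ((hf i hi).trans hfi)) hrest
    (prod_nonneg fun l hl => hf l (mem_of_mem_erase (mem_of_mem_erase hl)))
    (mul_nonneg ((hf i hi).trans hfi) ((hf j hj).trans hfj))

section TensorStep

variable {α β κ : Type*} [MeasurableSpace α] [MeasurableSpace β] [Fintype κ]
  {μ : Measure α} {ν : Measure β} [SFinite ν]

theorem integral_prod_sum_mul_pow [SFinite μ] (n : ℕ) (φ : κ → α → ℝ) (g : κ → β → ℝ)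
    (hφ : ∀ t : Fin n → κ, Integrable (fun x => ∏ l, φ (t l) x) μ)
    (hg : ∀ t : Fin n → κ, Integrable (fun y => ∏ l, g (t l) y) ν) :
    ∫ p, (∑ k, φ k p.1 * g k p.2) ^ n ∂(μ.prod ν)
      = ∑ t : Fin n → κ, (∫ x, ∏ l, φ (t l) x ∂μ) * ∫ y, ∏ l, g (t l) y ∂ν := by
  simp_rw [Fintype.sum_pow, prod_mul_distrib]
  rw [integral_finsetSum _ fun t _ => (hφ t).mul_prod (hg t)]
  exact sum_congr rfl fun t _ =>
    integral_prod_mul (fun x => ∏ l, φ (t l) x) fun y => ∏ l, g (t l) y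

variable [DecidableEq κ] [IsProbabilityMeasure μ]

theorem integral_prod_sum_mul_pow_four_le (k₀ : κ) (φ : κ → α → ℝ) (g : κ → β → ℝ)
    {M u v : ℝ} (hφ₀ : φ k₀ = 1) (hφ_mean : ∀ k ≠ k₀, ∫ x, φ k x ∂μ = 0)
    (hφ : ∀ t : Fin 4 → κ, Integrable (fun x => ∏ l, φ (t l) x) μ)
    (hM : ∀ t : Fin 4 → κ, |∫ x, ∏ l, φ (t l) x ∂μ| ≤ M)
    (hg : ∀ t : Fin 4 → κ, Integrable (fun y => ∏ l, g (t l) y) ν)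
    (hu : ∀ k, ∫ y, g k y ^ 4 ∂ν ≤ u ^ 2) (hv : ∀ k ≠ k₀, ∫ y, g k y ^ 4 ∂ν ≤ v ^ 2)
    (hu0 : 0 ≤ u) (hv0 : 0 ≤ v) :
    ∫ p, (∑ k, φ k p.1 * g k p.2) ^ 4 ∂(μ.prod ν)
      ≤ ∫ y, g k₀ y ^ 4 ∂ν + Fintype.card κ ^ 4 * (M * (u * v)) := by
  have hM0 : 0 ≤ M := (abs_nonneg _).trans (hM fun _ => k₀)
  have hcross : ∀ t ∈ univ.erase fun _ : Fin 4 => k₀,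
      (∫ x, ∏ l, φ (t l) x ∂μ) * ∫ y, ∏ l, g (t l) y ∂ν ≤ M * (u * v) := by
    intro t ht
    obtain ⟨i, hi⟩ := Function.ne_iff.1 (ne_of_mem_erase ht)
    by_cases hsingle : ∀ j ≠ i, t j = k₀
    · -- the `φ`-factor reduces to `∫ φ (t i) = 0`
      have hφt : (fun x => ∏ l, φ (t l) x) = φ (t i) := by
        funext x
        exact prod_eq_single i (fun j _ hj => by simp [hsingle j hj, hφ₀]) (by simp)
      rw [hφt, hφ_mean _ hi, zero_mul]
      positivity
    push Not at hsingle
    obtain ⟨j, hji, hj⟩ := hsingle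
    -- Hölder, with the sharper bound `v` on the two factors `g (t i)` and `g (t j)`
    have hsqrt : ∀ k w, ∫ y, g k y ^ 4 ∂ν ≤ w ^ 2 → 0 ≤ w → √(∫ y, g k y ^ 4 ∂ν) ≤ w :=
      fun k w h hw => Real.sqrt_le_iff.2 ⟨hw, h⟩
    have hprod : ∏ l, √(∫ y, g (t l) y ^ 4 ∂ν) ≤ v ^ 2 * u ^ 2 :=
      prod_le_sq_mul_pow_card_sub_two (mem_univ i) (mem_univ j) hji.symm
        (fun _ _ => Real.sqrt_nonneg _) (fun l _ => hsqrt _ _ (hu _) hu0)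
        (hsqrt _ _ (hv _ hi) hv0) (hsqrt _ _ (hv _ hj) hv0)
    have hI : |∫ y, ∏ l, g (t l) y ∂ν| ≤ u * v :=
      abs_le_of_sq_le_sq ((sq_integral_prod_four_le g hg t).trans (by nlinarith))
        (mul_nonneg hu0 hv0)
    exact (le_abs_self _).trans ((abs_mul _ _).trans_le
      (mul_le_mul (hM t) hI (abs_nonneg _) hM0))
  have hcard : (#(univ.erase fun _ : Fin 4 => k₀) : ℝ) ≤ Fintype.card κ ^ 4 := by
    exact_mod_cast (card_erase_le).trans_eq (by simp)
  rw [integral_prod_sum_mul_pow 4 φ g hφ hg, ← add_sum_erase _ _ (mem_univ fun _ => k₀)]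
  gcongr
  · simp [hφ₀]
  · exact (sum_le_card_nsmul _ _ _ hcross).trans (by
      rw [nsmul_eq_mul]; exact mul_le_mul_of_nonneg_right hcard (by positivity))

-- The induction step: `c = L ^ m` and `A k = ∫ (g k)²`.
theorem integral_prod_sum_mul_pow_four_le_sq (k₀ : κ) (φ : κ → α → ℝ) (g : κ → β → ℝ)
    (A : κ → ℝ) {M L c : ℝ} (hφ₀ : φ k₀ = 1) (hφ_mean : ∀ k ≠ k₀, ∫ x, φ k x ∂μ = 0)
    (hφ : ∀ t : Fin 4 → κ, Integrable (fun x => ∏ l, φ (t l) x) μ)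
    (hM : ∀ t : Fin 4 → κ, |∫ x, ∏ l, φ (t l) x ∂μ| ≤ M)
    (hg : ∀ t : Fin 4 → κ, Integrable (fun y => ∏ l, g (t l) y) ν)
    (hL : Fintype.card κ ^ 4 * M ≤ L) (hA : ∀ k, 0 ≤ A k) (hc : 0 ≤ c)
    (hg₀ : ∫ y, g k₀ y ^ 4 ∂ν ≤ (c * L * A k₀) ^ 2)
    (hgk : ∀ k ≠ k₀, ∫ y, g k y ^ 4 ∂ν ≤ (c * A k) ^ 2) :
    ∫ p, (∑ k, φ k p.1 * g k p.2) ^ 4 ∂(μ.prod ν) ≤ (c * L * ∑ k, A k) ^ 2 := by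
  have hM1 : 1 ≤ M := by simpa [hφ₀] using hM fun _ => k₀
  have hcard : (1 : ℝ) ≤ Fintype.card κ ^ 4 :=
    one_le_pow₀ (by exact_mod_cast Fintype.card_pos_iff.2 ⟨k₀⟩)
  have hL1 : 1 ≤ L := by nlinarith
  set S := ∑ k, A k
  set b := ∑ k ∈ univ.erase k₀, A k
  have hSb : S = A k₀ + b := (add_sum_erase _ _ (mem_univ k₀)).symm
  have hb0 : 0 ≤ b := sum_nonneg fun k _ => hA k
  have hAb : ∀ k ≠ k₀, A k ≤ b := fun k hk =>
    single_le_sum (fun k _ => hA k) (mem_erase.2 ⟨hk, mem_univ k⟩)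
  have hAS : ∀ k, A k ≤ S := fun k => single_le_sum (fun k _ => hA k) (mem_univ k)
  have hcL : 0 ≤ c * L := mul_nonneg hc (by linarith)
  have hu0 : 0 ≤ c * L * S := mul_nonneg hcL (hSb ▸ add_nonneg (hA k₀) hb0)
  have hu : ∀ k, ∫ y, g k y ^ 4 ∂ν ≤ (c * L * S) ^ 2 := by
    intro k
    by_cases hk : k = k₀
    · subst hk
      exact hg₀.trans (pow_le_pow_left₀ (mul_nonneg hcL (hA k)) (by gcongr; exact hAS k) 2)
    · refine (hgk k hk).trans (pow_le_pow_left₀ (mul_nonneg hc (hA k)) ?_ 2)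
      nlinarith [hAS k, hA k, mul_le_mul_of_nonneg_left hL1 hc]
  have hv : ∀ k ≠ k₀, ∫ y, g k y ^ 4 ∂ν ≤ (c * b) ^ 2 := fun k hk =>
    (hgk k hk).trans (pow_le_pow_left₀ (mul_nonneg hc (hA k)) (by gcongr; exact hAb k hk) 2)
  calc ∫ p, (∑ k, φ k p.1 * g k p.2) ^ 4 ∂(μ.prod ν)
      ≤ ∫ y, g k₀ y ^ 4 ∂ν + Fintype.card κ ^ 4 * (M * ((c * L * S) * (c * b))) :=
        integral_prod_sum_mul_pow_four_le k₀ φ g hφ₀ hφ_mean hφ hM hg hu hv hu0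
          (mul_nonneg hc hb0)
    _ ≤ (c * L * A k₀) ^ 2 + L * ((c * L * S) * (c * b)) := by
        have := mul_nonneg hu0 (mul_nonneg hc hb0)
        rw [← mul_assoc]; gcongr
    _ ≤ (c * L * S) ^ 2 := by
        rw [hSb]; nlinarith [mul_nonneg (mul_nonneg (hA k₀) hb0) (sq_nonneg (c * L))]

end TensorStep

theorem Fin.sum_univ_fun_succ {β M : Type*} [Fintype β] [AddCommMonoid M] {d : ℕ}
    (f : (Fin (d + 1) → β) → M) : ∑ r, f r = ∑ k, ∑ r, f (Fin.cons k r) := by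
  rw [← (Fin.consEquiv fun _ => β).sum_comp, Fintype.sum_prod_type]
  rfl

theorem integral_pi_fin_succ {E : Type*} [MeasurableSpace E] (μ : Measure E) [SigmaFinite μ]
    {d : ℕ} (F : (Fin (d + 1) → E) → ℝ) :
    ∫ x, F x ∂(Measure.pi fun _ => μ)
      = ∫ p, F (Fin.cons p.1 p.2) ∂(μ.prod (Measure.pi fun _ => μ)) := by
  rw [← (measurePreserving_piFinSuccAbove (fun _ => μ) 0).symm.integral_comp']
  simp [MeasurableEquiv.piFinSuccAbove_symm_apply, Fin.insertNthEquiv, Fin.insertNth_zero']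

noncomputable def mvPolynomialFunctions (d : ℕ) : Subalgebra ℝ ((Fin d → ℝ) → ℝ) :=
  (MvPolynomial.aeval fun i (x : Fin d → ℝ) => x i).range

theorem eval_apply_mem_mvPolynomialFunctions {d : ℕ} (p : ℝ[X]) (i : Fin d) :
    (fun x : Fin d → ℝ => p.eval (x i)) ∈ mvPolynomialFunctions d := by
  refine ⟨Polynomial.aeval (MvPolynomial.X i) p, ?_⟩
  ext x
  simp [← Polynomial.aeval_algHom_apply, Polynomial.aeval_fn_apply]

theorem Polynomial.integrable_eval {P : Measure ℝ} (hmom : ∀ m : ℕ, Integrable (fun z => z ^ m) P)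
    (p : ℝ[X]) : Integrable (fun z => p.eval z) P := by
  simp_rw [eval_eq_sum_range]
  exact integrable_finsetSum _ fun n _ => (hmom n).const_mul _

theorem integrable_of_mem_mvPolynomialFunctions {P : Measure ℝ} [SigmaFinite P]
    (hmom : ∀ m : ℕ, Integrable (fun z => z ^ m) P) {d : ℕ} {f : (Fin d → ℝ) → ℝ}
    (hf : f ∈ mvPolynomialFunctions d) :
    Integrable f (Measure.pi fun _ => P) := by
  obtain ⟨p, rfl⟩ := (AlgHom.mem_range _).1 hf
  rw [p.as_sum, map_sum]
  refine integrable_finsetSum' _ fun v _ => ?_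
  have hmono : (MvPolynomial.aeval fun i (x : Fin d → ℝ) => x i)
      (MvPolynomial.monomial v (p.coeff v)) = fun x => p.coeff v * ∏ i, x i ^ v i := by
    ext x
    simp [MvPolynomial.aeval_monomial, Finsupp.prod_fintype]
  rw [hmono]
  exact (Integrable.fintype_prod fun i => hmom (v i)).const_mul _

section OrthoExpansion

variable (q : ℕ → ℝ[X])

-- The paper's `f_γ`, with `γ` defined on the whole cube `(Fin n)^d`; degree bounds are imposed
-- as support conditions on `γ`.
noncomputable def orthoExpansion {d n : ℕ} (γ : (Fin d → Fin n) → ℝ) (x : Fin d → ℝ) : ℝ :=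
  ∑ r, γ r * ∏ i, (q (r i)).eval (x i)

theorem orthoExpansion_mem_mvPolynomialFunctions {d n : ℕ} (γ : (Fin d → Fin n) → ℝ) :
    orthoExpansion q γ ∈ mvPolynomialFunctions d := by
  have h : orthoExpansion q γ = ∑ r, γ r • ∏ i, fun x : Fin d → ℝ => (q (r i)).eval (x i) := by
    ext x
    simp [orthoExpansion, Finset.sum_apply, Finset.prod_apply]
  rw [h]
  exact Subalgebra.sum_mem _ fun r _ => Subalgebra.smul_mem _
    (Subalgebra.prod_mem _ fun i _ => eval_apply_mem_mvPolynomialFunctions _ i) _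

theorem orthoExpansion_cons {d n : ℕ} (γ : (Fin (d + 1) → Fin n) → ℝ) (x₀ : ℝ)
    (y : Fin d → ℝ) :
    orthoExpansion q γ (Fin.cons x₀ y)
      = ∑ k : Fin n, (q k).eval x₀ * orthoExpansion q (fun r => γ (Fin.cons k r)) y := by
  simp only [orthoExpansion, mul_sum, Fin.sum_univ_fun_succ (fun r => γ r * _), Fin.prod_univ_succ,
    Fin.cons_zero, Fin.cons_succ]
  exact sum_congr rfl fun k _ => sum_congr rfl fun r _ => by ring

variable (P : Measure ℝ)

theorem integral_eval_eq_zero (hq0 : q 0 = 1)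
    (hqorth : ∀ j k, ∫ z, (q j).eval z * (q k).eval z ∂P = if j = k then 1 else 0)
    {k : ℕ} (hk : k ≠ 0) : ∫ z, (q k).eval z ∂P = 0 := by
  simpa [hq0, hk] using hqorth k 0

variable [IsProbabilityMeasure P]

theorem integral_orthoExpansion_pow_four_le_of_support_zero (hq0 : q 0 = 1) {d n : ℕ}
    (γ : (Fin d → Fin (n + 1)) → ℝ) (hγ : ∀ r, γ r ≠ 0 → r = 0) :
    ∫ x, orthoExpansion q γ x ^ 4 ∂(Measure.pi fun _ => P) ≤ (∑ r, γ r ^ 2) ^ 2 := by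
  have hconst : ∀ x, orthoExpansion q γ x = γ 0 := fun x => by
    rw [orthoExpansion, sum_eq_single 0 (fun r _ hr => by rw [not_imp_comm.1 (hγ r) hr, zero_mul])
      (by simp)]
    simp [hq0]
  simp only [hconst, integral_const, probReal_univ, one_smul]
  rw [show γ 0 ^ 4 = (γ 0 ^ 2) ^ 2 by ring]
  exact pow_le_pow_left₀ (sq_nonneg _) (single_le_sum (fun r _ => sq_nonneg (γ r)) (mem_univ 0)) 2

noncomputable def hypercontractivityConst (n : ℕ) : ℝ :=
  (n + 1) ^ 4 * ∑ t : Fin 4 → Fin (n + 1), |∫ z, ∏ l, (q (t l)).eval z ∂P|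

theorem one_le_hypercontractivityConst (hq0 : q 0 = 1) (n : ℕ) :
    1 ≤ hypercontractivityConst q P n := by
  have hone : 1 ≤ ∑ t : Fin 4 → Fin (n + 1), |∫ z, ∏ l, (q (t l)).eval z ∂P| := by
    simpa [hq0] using single_le_sum
      (f := fun t : Fin 4 → Fin (n + 1) => |∫ z, ∏ l, (q (t l)).eval z ∂P|)
      (fun t _ => abs_nonneg _) (mem_univ 0)
  exact one_le_mul_of_one_le_of_one_le (one_le_pow₀ (by linarith)) hone

theorem integral_orthoExpansion_pow_four_le_succ (hmom : ∀ m : ℕ, Integrable (fun z => z ^ m) P)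
    (hq0 : q 0 = 1)
    (hqorth : ∀ j k, ∫ z, (q j).eval z * (q k).eval z ∂P = if j = k then 1 else 0)
    {n d m : ℕ} (ih : ∀ (m' : ℕ) (γ' : (Fin d → Fin (n + 1)) → ℝ),
      (∀ r, γ' r ≠ 0 → ∑ i, (r i : ℕ) ≤ m') →
      ∫ x, orthoExpansion q γ' x ^ 4 ∂(Measure.pi fun _ => P)
        ≤ (hypercontractivityConst q P n ^ m' * ∑ r, γ' r ^ 2) ^ 2)
    (γ : (Fin (d + 1) → Fin (n + 1)) → ℝ) (hγ : ∀ r, γ r ≠ 0 → ∑ i, (r i : ℕ) ≤ m + 1) :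
    ∫ x, orthoExpansion q γ x ^ 4 ∂(Measure.pi fun _ => P)
      ≤ (hypercontractivityConst q P n ^ (m + 1) * ∑ r, γ r ^ 2) ^ 2 := by
  have hdeg : ∀ k r, γ (Fin.cons k r) ≠ 0 → (k : ℕ) + ∑ i, (r i : ℕ) ≤ m + 1 := fun k r h => by
    simpa [Fin.sum_univ_succ] using hγ _ h
  rw [integral_pi_fin_succ, Fin.sum_univ_fun_succ fun r => γ r ^ 2,
    pow_succ (hypercontractivityConst q P n) m]
  simp_rw [orthoExpansion_cons]
  refine integral_prod_sum_mul_pow_four_le_sq (0 : Fin (n + 1)) (fun k z => (q k).eval z)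
    (M := ∑ t : Fin 4 → Fin (n + 1), |∫ z, ∏ l, (q (t l)).eval z ∂P|)
    (fun k => orthoExpansion q fun r => γ (Fin.cons k r)) (fun k => ∑ r, γ (Fin.cons k r) ^ 2)
    ?_ ?_ ?_ ?_ ?_ ?_ ?_ ?_ ?_ ?_
  · ext z; simp [hq0]
  · intro k hk
    exact integral_eval_eq_zero q P hq0 hqorth (Fin.val_ne_zero_iff.2 hk)
  · intro t
    simpa [← eval_prod] using Polynomial.integrable_eval hmom (∏ l, q (t l))
  · intro t
    exact single_le_sum (f := fun t : Fin 4 → Fin (n + 1) => |∫ z, ∏ l, (q (t l)).eval z ∂P|)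
      (fun t _ => abs_nonneg _) (mem_univ t)
  · intro t
    refine integrable_of_mem_mvPolynomialFunctions hmom ?_
    rw [← Finset.prod_fn]
    exact Subalgebra.prod_mem _ fun l _ =>
      orthoExpansion_mem_mvPolynomialFunctions q fun r => γ (Fin.cons (t l) r)
  · simp [hypercontractivityConst]
  · exact fun k => sum_nonneg fun r _ => sq_nonneg _
  · exact pow_nonneg (zero_le_one.trans (one_le_hypercontractivityConst q P hq0 n)) m
  · rw [← pow_succ]
    exact ih (m + 1) _ fun r h => by simpa using hdeg 0 r h
  · intro k hk
    have hk' : (k : ℕ) ≠ 0 := Fin.val_ne_zero_iff.2 hk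
    exact ih m _ fun r h => by have := hdeg k r h; omega

theorem integral_orthoExpansion_pow_four_le (hmom : ∀ m : ℕ, Integrable (fun z => z ^ m) P)
    (hq0 : q 0 = 1)
    (hqorth : ∀ j k, ∫ z, (q j).eval z * (q k).eval z ∂P = if j = k then 1 else 0)
    {n : ℕ} (d m : ℕ) (γ : (Fin d → Fin (n + 1)) → ℝ)
    (hγ : ∀ r, γ r ≠ 0 → ∑ i, (r i : ℕ) ≤ m) :
    ∫ x, orthoExpansion q γ x ^ 4 ∂(Measure.pi fun _ => P)
      ≤ (hypercontractivityConst q P n ^ m * ∑ r, γ r ^ 2) ^ 2 := by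
  have hconst : ∀ {d : ℕ} (γ : (Fin d → Fin (n + 1)) → ℝ), (∀ r, γ r ≠ 0 → r = 0) → ∀ m : ℕ,
      ∫ x, orthoExpansion q γ x ^ 4 ∂(Measure.pi fun _ => P)
        ≤ (hypercontractivityConst q P n ^ m * ∑ r, γ r ^ 2) ^ 2 := fun γ hγ m => by
    have hS : 0 ≤ ∑ r, γ r ^ 2 := sum_nonneg fun r _ => sq_nonneg _
    exact (integral_orthoExpansion_pow_four_le_of_support_zero q P hq0 γ hγ).trans
      (pow_le_pow_left₀ hS (le_mul_of_one_le_left hS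
        (one_le_pow₀ (one_le_hypercontractivityConst q P hq0 n))) 2)
  induction d generalizing m with
  | zero => exact hconst γ (fun r _ => Subsingleton.elim r 0) m
  | succ d ih =>
    rcases m with _ | m
    · refine hconst γ (fun r hr => funext fun i => Fin.ext ?_) 0
      exact sum_eq_zero_iff.1 (Nat.le_zero.1 (hγ r hr)) i (mem_univ i)
    · exact integral_orthoExpansion_pow_four_le_succ q P hmom hq0 hqorth ih γ hγ

theorem integrable_prod_eval_mul_prod_eval (hmom : ∀ m : ℕ, Integrable (fun z => z ^ m) P)
    {d : ℕ} (r s : Fin d → ℕ) :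
    Integrable (fun x => (∏ i, (q (r i)).eval (x i)) * ∏ i, (q (s i)).eval (x i))
      (Measure.pi fun _ => P) := by
  simp_rw [← prod_mul_distrib, ← eval_mul]
  exact Integrable.fintype_prod fun i => Polynomial.integrable_eval hmom _

theorem integral_prod_eval_mul_prod_eval
    (hqorth : ∀ j k, ∫ z, (q j).eval z * (q k).eval z ∂P = if j = k then 1 else 0)
    {d : ℕ} (r s : Fin d → ℕ) :
    ∫ x, (∏ i, (q (r i)).eval (x i)) * ∏ i, (q (s i)).eval (x i) ∂(Measure.pi fun _ => P)
      = if r = s then 1 else 0 := by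
  simp_rw [← prod_mul_distrib]
  rw [integral_fintype_prod_eq_prod (f := fun i z => (q (r i)).eval z * (q (s i)).eval z)]
  simp [hqorth, prod_boole, funext_iff]

theorem integral_sum_mIdx_pow_four_le (hmom : ∀ m : ℕ, Integrable (fun z => z ^ m) P)
    (hq0 : q 0 = 1)
    (hqorth : ∀ j k, ∫ z, (q j).eval z * (q k).eval z ∂P = if j = k then 1 else 0)
    {d ι : ℕ} (γ : MIdx d ι → ℝ) :
    ∫ x, (∑ r : MIdx d ι, γ r * ∏ i, (q (r.1 i : ℕ)).eval (x i)) ^ 4 ∂(Measure.pi fun _ => P)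
      ≤ (hypercontractivityConst q P ι ^ ι * ∑ r, γ r ^ 2) ^ 2 := by
  set γ' : (Fin d → Fin (ι + 1)) → ℝ := Function.extend Subtype.val γ 0
  have hext : ∀ w : (Fin d → Fin (ι + 1)) → ℝ, ∑ r : MIdx d ι, γ r * w r.1 = ∑ r, γ' r * w r :=
    fun w => Fintype.sum_of_injective _ Subtype.val_injective _ _
      (fun r hr => by simp [γ', Function.extend_apply' _ _ _ hr]) (fun r => by simp [γ'])
  have hsq : ∑ r : MIdx d ι, γ r ^ 2 = ∑ r, γ' r ^ 2 := by
    simpa [sq, γ', Subtype.val_injective.extend_apply] using hext γ'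
  have hγ' : ∀ r, γ' r ≠ 0 → ∑ i, (r i : ℕ) ≤ ι := fun r hr => by
    by_contra h
    refine hr (Function.extend_apply' _ _ _ ?_)
    rintro ⟨a, rfl⟩
    exact h a.2
  have hf : ∀ x, ∑ r : MIdx d ι, γ r * ∏ i, (q (r.1 i : ℕ)).eval (x i) = orthoExpansion q γ' x :=
    fun x => hext fun r => ∏ i, (q (r i : ℕ)).eval (x i)
  simp_rw [hf, hsq]
  exact integral_orthoExpansion_pow_four_le q P hmom hq0 hqorth d ι γ' hγ'

theorem integral_sum_mIdx_sq (hmom : ∀ m : ℕ, Integrable (fun z => z ^ m) P)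
    (hqorth : ∀ j k, ∫ z, (q j).eval z * (q k).eval z ∂P = if j = k then 1 else 0)
    {d ι : ℕ} (γ : MIdx d ι → ℝ) :
    ∫ x, (∑ r : MIdx d ι, γ r * ∏ i, (q (r.1 i : ℕ)).eval (x i)) ^ 2 ∂(Measure.pi fun _ => P)
      = ∑ r, γ r ^ 2 := by
  have hprod := integral_prod_eval_mul_prod_eval q P hqorth (d := d)
  refine integral_sq_sum_of_orthonormal
    (fun (r : MIdx d ι) (x : Fin d → ℝ) => ∏ i, (q (r.1 i : ℕ)).eval (x i)) ?_ ?_ ?_ γ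
  · exact fun a b => integrable_prod_eval_mul_prod_eval q P hmom (fun i => a.1 i) fun i => b.1 i
  · exact fun a => by simpa using hprod (fun i => a.1 i) (fun i => a.1 i)
  · intro a b hab
    rw [hprod (fun i => a.1 i) fun i => b.1 i, if_neg]
    exact fun h => hab (Subtype.ext (funext fun i => Fin.ext (congrFun h i)))

end OrthoExpansion

theorem statement_15_general
    (P : Measure ℝ) [IsProbabilityMeasure P]
    (hmom : ∀ m : ℕ, Integrable (fun z => z ^ m) P)
    (q : ℕ → Polynomial ℝ)
    (hq0 : q 0 = 1)
    (hqorth : ∀ j k, (∫ z, (q j).eval z * (q k).eval z ∂P) = if j = k then 1 else 0)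
    (ι : ℕ) :
    ∃ C > 0, ∀ (d : ℕ), 0 < d → ∀ γ : MIdx d ι → ℝ,
      (∫ x : Fin d → ℝ,
          (∑ r : MIdx d ι, γ r * ∏ i, (q (r.1 i : ℕ)).eval (x i)) ^ 4
          ∂(Measure.pi fun _ : Fin d => P)) ≤
        C * (∑ r : MIdx d ι, γ r ^ 2) ^ 2 ∧
      (∫ x : Fin d → ℝ,
          (∑ r : MIdx d ι, γ r * ∏ i, (q (r.1 i : ℕ)).eval (x i)) ^ 2
          ∂(Measure.pi fun _ : Fin d => P)) =
        ∑ r : MIdx d ι, γ r ^ 2 := by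
  refine ⟨hypercontractivityConst q P ι ^ (2 * ι),
    pow_pos (zero_lt_one.trans_le (one_le_hypercontractivityConst q P hq0 ι)) _,
    fun d _ γ => ⟨?_, integral_sum_mIdx_sq q P hmom hqorth γ⟩⟩
  calc _ ≤ (hypercontractivityConst q P ι ^ ι * ∑ r, γ r ^ 2) ^ 2 :=
        integral_sum_mIdx_pow_four_le q P hmom hq0 hqorth γ
    _ = _ := by ring

/-- hypercontractivity / L⁴–L² equivalence for low-degree parts of the
weakly-correlated orthonormal polynomial basis. There is a constant `C` depending only on
`ι` and `P` such that for every dimension `d` and all coefficients `γ`, the function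
`f_γ = Σ_{|r| ≤ ι} γ_r q_r` satisfies `E f_γ⁴ ≤ C (E f_γ²)² = C (Σ γ_r²)²`. -/
theorem statement_15
    (P : Measure ℝ) [IsProbabilityMeasure P]
    (hmom : ∀ m : ℕ, Integrable (fun z => z ^ m) P)
    (hsupp : ∀ S : Finset ℝ, P (S : Set ℝ) < 1)
    (q : ℕ → Polynomial ℝ)
    (hq0 : q 0 = 1)
    (hqdeg : ∀ k, (q k).natDegree = k)
    (hqlead : ∀ k, 0 < (q k).leadingCoeff)
    (hqorth : ∀ j k, (∫ z, (q j).eval z * (q k).eval z ∂P) = if j = k then 1 else 0)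
    (ι : ℕ) (hι : 1 ≤ ι) :
    ∃ C > 0, ∀ (d : ℕ), 0 < d → ∀ γ : MIdx d ι → ℝ,
      (∫ x : Fin d → ℝ,
          (∑ r : MIdx d ι, γ r * ∏ i, (q (r.1 i : ℕ)).eval (x i)) ^ 4
          ∂(Measure.pi fun _ : Fin d => P)) ≤
        C * (∑ r : MIdx d ι, γ r ^ 2) ^ 2 ∧
      (∫ x : Fin d → ℝ,
          (∑ r : MIdx d ι, γ r * ∏ i, (q (r.1 i : ℕ)).eval (x i)) ^ 2
          ∂(Measure.pi fun _ : Fin d => P)) =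
        ∑ r : MIdx d ι, γ r ^ 2 :=
  statement_15_general P hmom q hq0 hqorth ι
end
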